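/- Let χ : ℝ₊ → ℝ be a kernel in the class φ, let r ∈ ℕ, and let f : ℝ₊ → ℝ be a bounded measurable function. Then for every point x ∈ ℝ₊ at which f is continuous, lim_{w → ∞} (E_{w,r}^χ f)(x) = f(x). -/

import Mathlib

/-!
The signed binomial coefficients `(-1)^(r-m+1) C(r,m)`, `1 ≤ m ≤ r`, sum to `(-1)^r`, and
`∫_{[1,h]^r} ∏ dtᵢ/tᵢ = (log h)^r`; hence the Mellin–Steklov integral reproduces constants, and
`|F_{r,h}(y) - c| ≤ (2^r - 1) ε` as soon as `|f - c| ≤ ε` on `[y, y h^r]`.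
By (χ₂), `E_w f(x) - f(x) = Σ_k χ(e^{-k} x^w) (F_k - f(x))`. When `|k - w log x| ≤ γ`, the
points `e^{k/w} [1, e^{r/w}]` lie within logarithmic distance `(γ + r)/w` of `x`, so continuity
bounds `F_k - f(x)` and these terms contribute at most `M₀(χ) (2^r - 1) ε`; the remaining terms
contribute at most `(2^r - 1) · 2‖f‖_∞` times the tail in (χ₃), which is small for large `γ`.
-/

open MeasureTheory Filter Set

/-- The Haar measure `dx/x` on `(0, ∞)`, as a measure on `ℝ`. -/
noncomputable def mulHaar : Measure ℝ :=
  (volume.restrict (Set.Ioi (0:ℝ))).withDensity fun x => ENNReal.ofReal x⁻¹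

/-- Sup-norm of `f` over `(0, ∞)`. -/
noncomputable def supNorm (f : ℝ → ℝ) : ℝ :=
  ⨆ x : Set.Ioi (0:ℝ), |f (x : ℝ)|

/-- The `L^p` norm with respect to the measure `dx/x` on `(0, ∞)`. -/
noncomputable def lpNorm (p : ℝ) (g : ℝ → ℝ) : ℝ :=
  (∫ x, |g x| ^ p ∂mulHaar) ^ (1 / p)

/-- Logarithmic difference of order `m`: `Δ_h^m f (x) = ∑_{j=0}^m (-1)^{m-j} C(m,j) f (x h^j)`. -/
noncomputable def logDiff (m : ℕ) (f : ℝ → ℝ) (h x : ℝ) : ℝ :=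
  ∑ j ∈ Finset.range (m + 1), (-1 : ℝ) ^ (m - j) * (m.choose j : ℝ) * f (x * h ^ j)

/-- Logarithmic modulus of smoothness of order `m`. -/
noncomputable def logModulus (m : ℕ) (f : ℝ → ℝ) (δ : ℝ) : ℝ :=
  ⨆ h : {h : ℝ // 0 < Real.log h ∧ Real.log h ≤ δ},
    supNorm fun x => logDiff m f (h : ℝ) x

/-- The Mellin–Steklov integral of order `r`:
`F_{r,h}(x) = (-log h)^{-r} ∫₁^h ⋯ ∫₁^h ∑_{m=1}^r (-1)^{r-m+1} C(r,m)
  f (x (t₁⋯t_r)^{m/r}) dt₁/t₁ ⋯ dt_r/t_r`. -/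
noncomputable def mellinSteklov (r : ℕ) (f : ℝ → ℝ) (h : ℝ) (x : ℝ) : ℝ :=
  ((-Real.log h) ^ r)⁻¹ *
    ∫ t : Fin r → ℝ in Set.univ.pi fun _ => Set.Icc 1 h,
      (∑ m ∈ Finset.Icc 1 r,
        (-1 : ℝ) ^ ((r : ℤ) - (m : ℤ) + 1) * (r.choose m : ℝ) *
          f (x * (∏ i, t i) ^ ((m : ℝ) / (r : ℝ)))) * ∏ i, (t i)⁻¹

/-- `M₀(χ) = sup_{u > 0} ∑_{k ∈ ℤ} |χ(e^{-k} u)|`. -/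
noncomputable def M0 (χ : ℝ → ℝ) : ℝ :=
  ⨆ u : Set.Ioi (0:ℝ), ∑' k : ℤ, |χ (Real.exp (-(k : ℝ)) * (u : ℝ))|

/-- The Mellin–Steklov exponential sampling operator of order `r`:
`(E_{w,r}^χ f)(x) = ∑_{k ∈ ℤ} χ(e^{-k} x^w) F_{r, e^{1/w}}(e^{k/w})`. -/
noncomputable def samplingOp (χ : ℝ → ℝ) (r : ℕ) (f : ℝ → ℝ) (w : ℝ) (x : ℝ) : ℝ :=
  ∑' k : ℤ, χ (Real.exp (-(k : ℝ)) * x ^ w) *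
    mellinSteklov r f (Real.exp (1 / w)) (Real.exp ((k : ℝ) / w))

/-- The kernel class `φ`: continuity together with conditions (χ₁), (χ₂), (χ₃). -/
structure IsKernel (χ : ℝ → ℝ) : Prop where
  cont : ContinuousOn χ (Set.Ioi 0)
  integrable : Integrable χ mulHaar
  bddOnIcc : ∃ C, ∀ x ∈ Set.Icc (Real.exp (-1)) (Real.exp 1), |χ x| ≤ C
  summable_abs : ∀ u : ℝ, 0 < u → Summable fun k : ℤ => |χ (Real.exp (-(k : ℝ)) * u)|
  sum_eq_one : ∀ u : ℝ, 0 < u → ∑' k : ℤ, χ (Real.exp (-(k : ℝ)) * u) = 1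
  m0_bdd : BddAbove (Set.range fun u : Set.Ioi (0:ℝ) =>
    ∑' k : ℤ, |χ (Real.exp (-(k : ℝ)) * (u : ℝ))|)
  decay : Tendsto (fun γ : ℝ => ⨆ u : Set.Ioi (0:ℝ),
      ∑' k : {k : ℤ // γ < |(k : ℝ) - Real.log (u : ℝ)|},
        |χ (Real.exp (-((k : ℤ) : ℝ)) * (u : ℝ))|)
    atTop (nhds 0)

open Real

open Finset in
lemma sum_Icc_one_choose (r : ℕ) : ∑ m ∈ Icc 1 r, (r.choose m : ℝ) = 2 ^ r - 1 := by
  have h := Nat.sum_range_choose r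
  rw [Nat.range_succ_eq_Icc_zero, ← Finset.insert_Icc_add_one_left_eq_Icc r.zero_le,
    sum_insert (by simp), zero_add, Nat.choose_zero_right] at h
  rw [eq_sub_iff_add_eq']
  exact_mod_cast h

open Finset in
lemma sum_Icc_one_signed_choose {r : ℕ} (hr : r ≠ 0) :
    ∑ m ∈ Icc 1 r, (-1 : ℝ) ^ ((r : ℤ) - m + 1) * r.choose m = (-1) ^ r := by
  have h : ∑ m ∈ range (r + 1), ((-1) ^ m * r.choose m : ℝ) = 0 := by
    exact_mod_cast Int.alternating_sum_range_choose_of_ne hr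
  rw [Nat.range_succ_eq_Icc_zero, ← Finset.insert_Icc_add_one_left_eq_Icc r.zero_le,
    sum_insert (by simp), zero_add, Nat.choose_zero_right] at h
  have hsign : ∀ m : ℕ, (-1 : ℝ) ^ ((r : ℤ) - m + 1) = -((-1) ^ r * (-1) ^ m) := by
    intro m
    rw [zpow_add₀ (by norm_num), zpow_sub₀ (by norm_num), zpow_natCast, zpow_natCast, zpow_one,
      div_eq_mul_inv, ← inv_pow, inv_neg, inv_one]
    ring
  simp only [hsign, neg_mul, mul_assoc, sum_neg_distrib, ← mul_sum]
  linear_combination (-(-1 : ℝ) ^ r) * h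

lemma integral_pi_Icc_prod_inv {ι : Type*} [Fintype ι] {h : ℝ} (hh : 1 ≤ h) :
    ∫ t : ι → ℝ in univ.pi fun _ => Icc 1 h, ∏ i, (t i)⁻¹ = log h ^ Fintype.card ι := by
  rw [volume_pi, Measure.restrict_pi_pi, integral_fintype_prod_eq_prod (f := fun _ z => z⁻¹),
    integral_Icc_eq_integral_Ioc, ← intervalIntegral.integral_of_le hh,
    integral_inv_of_pos one_pos (by linarith), div_one, Finset.prod_const, Finset.card_univ]

lemma integrableOn_pi_Icc_prod_inv {ι : Type*} [Fintype ι] (h : ℝ) :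
    IntegrableOn (fun t : ι → ℝ => ∏ i, (t i)⁻¹) (univ.pi fun _ => Icc 1 h) := by
  rw [IntegrableOn, volume_pi, Measure.restrict_pi_pi]
  refine Integrable.fintype_prod (f := fun _ z => z⁻¹) fun _ => ?_
  exact (continuousOn_inv₀.mono fun z hz => (zero_lt_one.trans_le hz.1).ne').integrableOn_Icc

noncomputable def steklovIntegrand (r : ℕ) (f : ℝ → ℝ) (x : ℝ) (t : Fin r → ℝ) : ℝ :=
  (∑ m ∈ Finset.Icc 1 r,
    (-1 : ℝ) ^ ((r : ℤ) - (m : ℤ) + 1) * (r.choose m : ℝ) *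
      f (x * (∏ i, t i) ^ ((m : ℝ) / (r : ℝ)))) * ∏ i, (t i)⁻¹

section Steklov

variable {r : ℕ} {f : ℝ → ℝ} {h x : ℝ}

lemma mellinSteklov_eq_integral (r : ℕ) (f : ℝ → ℝ) (h x : ℝ) :
    mellinSteklov r f h x =
      ((-log h) ^ r)⁻¹ * ∫ t in univ.pi fun _ => Icc 1 h, steklovIntegrand r f x t :=
  rfl

lemma measurable_steklovIntegrand (hf : Measurable f) (x : ℝ) :
    Measurable (steklovIntegrand r f x) := by
  unfold steklovIntegrand
  fun_prop

lemma mul_prod_rpow_mem_Icc {m : ℕ} (hm : m ∈ Finset.Icc 1 r) (hx : 0 ≤ x) {t : Fin r → ℝ}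
    (ht : t ∈ univ.pi fun _ => Icc 1 h) :
    x * (∏ i, t i) ^ ((m : ℝ) / r) ∈ Icc x (x * h ^ r) := by
  obtain ⟨-, hmr⟩ := Finset.mem_Icc.mp hm
  have ht1 : ∀ i, 1 ≤ t i := fun i => (ht i (mem_univ i)).1
  have hprod1 : 1 ≤ ∏ i, t i := Finset.one_le_prod fun i _ => ht1 i
  have hprod : ∏ i, t i ≤ h ^ r := by
    simpa using Finset.prod_le_prod (s := Finset.univ) (fun i _ => zero_le_one.trans (ht1 i))
      fun i _ => (ht i (mem_univ i)).2
  have hexp : (m : ℝ) / r ≤ 1 := div_le_one_of_le₀ (by exact_mod_cast hmr) (Nat.cast_nonneg r)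
  refine ⟨le_mul_of_one_le_right hx (one_le_rpow hprod1 (by positivity)),
    mul_le_mul_of_nonneg_left ?_ hx⟩
  calc (∏ i, t i) ^ ((m : ℝ) / r) ≤ (∏ i, t i) ^ (1 : ℝ) :=
        rpow_le_rpow_of_exponent_le hprod1 hexp
    _ ≤ h ^ r := by rwa [rpow_one]

lemma abs_steklovIntegrand_le {ε : ℝ} (hx : 0 ≤ x) (hf : ∀ z ∈ Icc x (x * h ^ r), |f z| ≤ ε)
    {t : Fin r → ℝ} (ht : t ∈ univ.pi fun _ => Icc 1 h) :
    |steklovIntegrand r f x t| ≤ (2 ^ r - 1) * ε * ∏ i, (t i)⁻¹ := by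
  have hP : 0 ≤ ∏ i, (t i)⁻¹ :=
    Finset.prod_nonneg fun i _ => inv_nonneg.mpr (zero_le_one.trans (ht i (mem_univ i)).1)
  rw [steklovIntegrand, abs_mul, abs_of_nonneg hP, ← sum_Icc_one_choose, Finset.sum_mul]
  refine mul_le_mul_of_nonneg_right ((Finset.abs_sum_le_sum_abs _ _).trans
    (Finset.sum_le_sum fun m hm => ?_)) hP
  rw [abs_mul, abs_mul, abs_neg_one_zpow, one_mul, Nat.abs_cast]
  exact mul_le_mul_of_nonneg_left (hf _ (mul_prod_rpow_mem_Icc hm hx ht)) (Nat.cast_nonneg _)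

lemma abs_mellinSteklov_le {ε : ℝ} (hh : 1 < h) (hx : 0 ≤ x)
    (hf : ∀ z ∈ Icc x (x * h ^ r), |f z| ≤ ε) :
    |mellinSteklov r f h x| ≤ (2 ^ r - 1) * ε := by
  have hL : 0 < log h ^ r := pow_pos (log_pos hh) r
  have hint : |∫ t in univ.pi fun _ => Icc 1 h, steklovIntegrand r f x t| ≤
      (2 ^ r - 1) * ε * log h ^ r := by
    have hP := integral_pi_Icc_prod_inv (ι := Fin r) hh.le
    rw [Fintype.card_fin] at hP
    rw [← hP, ← integral_const_mul]
    exact norm_integral_le_of_norm_le ((integrableOn_pi_Icc_prod_inv h).const_mul _) <|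
      ae_restrict_of_forall_mem (MeasurableSet.univ_pi fun _ => measurableSet_Icc)
      fun t ht => (Real.norm_eq_abs _).trans_le (abs_steklovIntegrand_le hx hf ht)
  rw [mellinSteklov_eq_integral, abs_mul, abs_inv, abs_pow, abs_neg, abs_of_pos (log_pos hh),
    inv_mul_le_iff₀ hL, mul_comm (log h ^ r)]
  exact hint

lemma integrableOn_steklovIntegrand {C : ℝ} (hf : Measurable f) (hx : 0 ≤ x)
    (hC : ∀ z ∈ Icc x (x * h ^ r), |f z| ≤ C) :
    IntegrableOn (steklovIntegrand r f x) (univ.pi fun _ => Icc 1 h) :=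
  Integrable.mono' ((integrableOn_pi_Icc_prod_inv h).const_mul ((2 ^ r - 1) * C))
    (measurable_steklovIntegrand hf x).aestronglyMeasurable.restrict
    (ae_restrict_of_forall_mem (MeasurableSet.univ_pi fun _ => measurableSet_Icc)
      fun _ ht => abs_steklovIntegrand_le hx hC ht)

lemma steklovIntegrand_sub_const (hr : r ≠ 0) (c x : ℝ) (t : Fin r → ℝ) :
    steklovIntegrand r (fun z => f z - c) x t =
      steklovIntegrand r f x t - (-1) ^ r * c * ∏ i, (t i)⁻¹ := by
  simp only [steklovIntegrand, mul_sub, Finset.sum_sub_distrib, ← Finset.sum_mul,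
    sum_Icc_one_signed_choose hr]
  ring

lemma mellinSteklov_sub_const (hr : r ≠ 0) (hh : 1 < h) (c : ℝ)
    (hint : IntegrableOn (steklovIntegrand r f x) (univ.pi fun _ => Icc 1 h)) :
    mellinSteklov r (fun z => f z - c) h x = mellinSteklov r f h x - c := by
  have hL : log h ≠ 0 := (log_pos hh).ne'
  simp only [mellinSteklov_eq_integral, steklovIntegrand_sub_const hr,
    integral_sub hint ((integrableOn_pi_Icc_prod_inv h).const_mul _), integral_const_mul,
    integral_pi_Icc_prod_inv hh.le, Fintype.card_fin]
  rw [mul_sub, neg_pow]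
  field_simp

lemma abs_mellinSteklov_sub_le {c ε : ℝ} (hr : r ≠ 0) (hf : Measurable f) (hh : 1 < h)
    (hx : 0 ≤ x) (hfc : ∀ z ∈ Icc x (x * h ^ r), |f z - c| ≤ ε) :
    |mellinSteklov r f h x - c| ≤ (2 ^ r - 1) * ε := by
  have hbdd : ∀ z ∈ Icc x (x * h ^ r), |f z| ≤ |c| + ε := fun z hz => by
    linarith [hfc z hz, abs_sub_abs_le_abs_sub (f z) c]
  rw [← mellinSteklov_sub_const hr hh c (integrableOn_steklovIntegrand hf hx hbdd)]
  exact abs_mellinSteklov_le hh hx hfc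

end Steklov

lemma abs_tsum_mul_sub_le {ι : Type*} {a F : ι → ℝ} {c M B τ η : ℝ} (p : ι → Prop)
    (ha : Summable fun k => |a k|) (ha1 : ∑' k, a k = 1) (hM : ∑' k, |a k| ≤ M)
    (hτ : ∑' k : {k // p k}, |a k| ≤ τ) (hB0 : 0 ≤ B) (hB : ∀ k, |F k - c| ≤ B)
    (hη0 : 0 ≤ η) (hη : ∀ k, ¬ p k → |F k - c| ≤ η) :
    |∑' k, a k * F k - c| ≤ M * η + B * τ := by
  set b : ι → ℝ := fun k => |a k| * |F k - c|
  have hb : Summable b := (ha.mul_right B).of_nonneg_of_le (fun k => by positivity)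
    fun k => mul_le_mul_of_nonneg_left (hB k) (abs_nonneg _)
  have hdev : Summable fun k => a k * (F k - c) := .of_abs (by simpa only [abs_mul] using hb)
  have hsum : Summable fun k => a k * F k := by
    simpa only [mul_sub, sub_add_cancel] using hdev.add (ha.of_abs.mul_right c)
  have hdecomp : ∑' k, a k * F k - c = ∑' k, a k * (F k - c) := by
    simp only [mul_sub]
    rw [hsum.tsum_sub (ha.of_abs.mul_right c), tsum_mul_right, ha1, one_mul]
  have hfar : ∑' k : {k // p k}, b k ≤ B * τ := by
    have hle : ∀ k : {k // p k}, b k ≤ B * |a k| := fun k => by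
      simpa only [b, mul_comm B] using mul_le_mul_of_nonneg_left (hB k) (abs_nonneg (a k))
    calc ∑' k : {k // p k}, b k ≤ ∑' k : {k // p k}, B * |a k| :=
          (hb.subtype _).tsum_le_tsum hle ((ha.mul_left B).subtype _)
      _ ≤ B * τ := by rw [tsum_mul_left]; exact mul_le_mul_of_nonneg_left hτ hB0
  have hnear : ∑' k : {k // ¬ p k}, b k ≤ M * η := by
    have hle : ∀ k : {k // ¬ p k}, b k ≤ η * |a k| := fun k => by
      simpa only [b, mul_comm η] using mul_le_mul_of_nonneg_left (hη k k.2) (abs_nonneg (a k))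
    calc ∑' k : {k // ¬ p k}, b k ≤ ∑' k : {k // ¬ p k}, η * |a k| :=
          (hb.subtype _).tsum_le_tsum hle ((ha.mul_left η).subtype _)
      _ ≤ η * M := by
          rw [tsum_mul_left]
          exact mul_le_mul_of_nonneg_left
            ((ha.tsum_subtype_le _ {k | ¬ p k} fun k => abs_nonneg _).trans hM) hη0
      _ = M * η := mul_comm η M
  rw [hdecomp]
  calc |∑' k, a k * (F k - c)| ≤ ∑' k, b k := by
        simpa only [Real.norm_eq_abs, abs_mul] using
          norm_tsum_le_tsum_norm (f := fun k => a k * (F k - c))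
            (by simpa only [Real.norm_eq_abs, abs_mul] using hb)
    _ = ∑' k : {k // p k}, b k + ∑' k : {k // ¬ p k}, b k :=
        (Summable.tsum_add_tsum_compl (s := {k | p k}) (hb.subtype _) (hb.subtype _)).symm
    _ ≤ M * η + B * τ := by linarith

lemma tendsto_nhds_of_forall_eventually_abs_sub_le {α : Type*} {l : Filter α} {u : α → ℝ}
    {c A : ℝ} (h : ∀ ε > 0, ∀ᶠ w in l, |u w - c| ≤ A * ε) : Tendsto u l (nhds c) := by
  refine Metric.tendsto_nhds.mpr fun ε hε => ?_
  have hA : 0 < |A| + 1 := by positivity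
  filter_upwards [h (ε / (|A| + 1)) (div_pos hε hA)] with w hw
  rw [Real.dist_eq]
  calc |u w - c| ≤ A * (ε / (|A| + 1)) := hw
    _ ≤ |A| * (ε / (|A| + 1)) := by gcongr; exact le_abs_self A
    _ < (|A| + 1) * (ε / (|A| + 1)) := by gcongr; linarith
    _ = ε := mul_div_cancel₀ ε hA.ne'

namespace IsKernel

variable {χ : ℝ → ℝ}

lemma tsum_abs_le_M0 (hχ : IsKernel χ) {u : ℝ} (hu : 0 < u) :
    ∑' k : ℤ, |χ (exp (-(k : ℝ)) * u)| ≤ M0 χ :=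
  le_ciSup hχ.m0_bdd (⟨u, hu⟩ : Ioi (0 : ℝ))

lemma eventually_tsum_abs_far_lt (hχ : IsKernel χ) {ε : ℝ} (hε : 0 < ε) :
    ∀ᶠ γ in atTop, ∀ u : ℝ, 0 < u →
      ∑' k : {k : ℤ // γ < |(k : ℝ) - log u|}, |χ (exp (-((k : ℤ) : ℝ)) * u)| < ε := by
  filter_upwards [hχ.decay.eventually_lt_const hε] with γ hγ u hu
  refine (le_ciSup ⟨M0 χ, ?_⟩ (⟨u, hu⟩ : Ioi (0 : ℝ))).trans_lt hγ
  rintro _ ⟨v, rfl⟩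
  exact ((hχ.summable_abs v v.2).tsum_subtype_le _ {k : ℤ | γ < |(k : ℝ) - log v|}
    fun _ => abs_nonneg _).trans (hχ.tsum_abs_le_M0 v.2)

end IsKernel

lemma abs_log_sub_le_of_mem_Icc {r : ℕ} {k : ℤ} {w γ x z : ℝ} (hw : 0 < w)
    (hk : |k - w * log x| ≤ γ) (hz : z ∈ Icc (exp (k / w)) (exp (k / w) * exp (1 / w) ^ r)) :
    |log z - log x| ≤ (γ + r) / w := by
  have hz0 : 0 < z := (exp_pos _).trans_le hz.1
  have hlo : (k : ℝ) ≤ w * log z := by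
    rw [← div_le_iff₀' hw, ← log_exp (k / w)]
    exact log_le_log (exp_pos _) hz.1
  have hhi : w * log z ≤ k + r := by
    rw [← le_div_iff₀' hw, ← log_exp ((k + r) / w)]
    refine log_le_log hz0 (hz.2.trans_eq ?_)
    rw [← exp_nat_mul, ← exp_add]
    ring_nf
  rw [le_div_iff₀ hw, ← abs_of_pos hw, ← abs_mul, abs_le]
  rw [abs_le] at hk
  constructor <;> linarith

lemma ContinuousWithinAt.exists_abs_sub_lt_of_abs_log_sub_lt {f : ℝ → ℝ} {x ε : ℝ}
    (hf : ContinuousWithinAt f (Ioi 0) x) (hx : 0 < x) (hε : 0 < ε) :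
    ∃ δ > 0, ∀ z, 0 < z → |Real.log z - Real.log x| < δ → |f z - f x| < ε := by
  rw [← exp_log hx] at hf
  have hcomp : ContinuousAt (f ∘ exp) (Real.log x) :=
    (continuousWithinAt_univ _ _).mp
      (hf.comp continuous_exp.continuousWithinAt fun y _ => exp_pos y)
  obtain ⟨δ, hδ, hfδ⟩ := Metric.continuousAt_iff.mp hcomp ε hε
  refine ⟨δ, hδ, fun z hz hzx => ?_⟩
  simpa only [Function.comp, exp_log hz, exp_log hx, Real.dist_eq] using
    hfδ (x := Real.log z) hzx

/-- pointwise convergence of `E_{w,r}^χ f` at every point of continuity. -/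
theorem stmt_6 (χ : ℝ → ℝ) (hχ : IsKernel χ) (r : ℕ) (hr : 0 < r)
    (f : ℝ → ℝ) (hmeas : Measurable f) (hbdd : ∃ C, ∀ y : ℝ, 0 < y → |f y| ≤ C)
    (x : ℝ) (hx : 0 < x) (hcont : ContinuousWithinAt f (Set.Ioi 0) x) :
    Tendsto (fun w => samplingOp χ r f w x) atTop (nhds (f x)) := by
  obtain ⟨C, hC⟩ := hbdd
  have hfC : ∀ z, 0 < z → |f z - f x| ≤ 2 * C := fun z hz =>
    (abs_sub _ _).trans (by linarith [hC z hz, hC x hx])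
  have hK : (0 : ℝ) ≤ 2 ^ r - 1 := sub_nonneg.mpr (one_le_pow₀ one_le_two)
  have hC0 : 0 ≤ 2 * C := (abs_nonneg _).trans (hfC x hx)
  refine tendsto_nhds_of_forall_eventually_abs_sub_le
    (A := (2 ^ r - 1) * (M0 χ + 2 * C)) fun ε hε => ?_
  obtain ⟨δ, hδ, hfδ⟩ := hcont.exists_abs_sub_lt_of_abs_log_sub_lt hx hε
  obtain ⟨γ, hγ⟩ := (hχ.eventually_tsum_abs_far_lt hε).exists
  have hwδ : ∀ᶠ w in atTop, (γ + r) / w < δ :=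
    (tendsto_const_nhds.div_atTop tendsto_id).eventually_lt_const hδ
  filter_upwards [eventually_gt_atTop 0, hwδ] with w hw hwδ
  have hxw : 0 < x ^ w := rpow_pos_of_pos hx w
  have hsteklov : ∀ (k : ℤ) {η : ℝ},
      (∀ z ∈ Icc (exp (k / w)) (exp (k / w) * exp (1 / w) ^ r), |f z - f x| ≤ η) →
        |mellinSteklov r f (exp (1 / w)) (exp (k / w)) - f x| ≤ (2 ^ r - 1) * η := fun k _ =>
    abs_mellinSteklov_sub_le hr.ne' hmeas (one_lt_exp_iff.mpr (one_div_pos.mpr hw))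
      (exp_pos _).le
  refine (abs_tsum_mul_sub_le (fun k : ℤ => γ < |k - log (x ^ w)|) (hχ.summable_abs _ hxw)
    (hχ.sum_eq_one _ hxw) (hχ.tsum_abs_le_M0 hxw) (hγ _ hxw).le (mul_nonneg hK hC0) ?far
    (mul_nonneg hK hε.le) ?near).trans_eq (by ring)
  case far =>
    exact fun k => hsteklov k fun z hz => hfC z ((exp_pos _).trans_le hz.1)
  case near =>
    intro k hk
    rw [not_lt, log_rpow hx] at hk
    exact hsteklov k fun z hz => (hfδ z ((exp_pos _).trans_le hz.1)
      ((abs_log_sub_le_of_mem_Icc hw hk hz).trans_lt hwδ)).le
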